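/- Let L be a finitary first-order language with only finitely many function symbols and constant symbols, let φ be an L-sentence, and let n ≥ 1 be a natural number. Then there is an L-sentence expressing θ_{≤n}(φ), and there is an L-sentence expressing θ_n(φ). That is, there are L-sentences χ and χ' such that for every nonempty L-structure A: A ⊨ χ iff A has a substructure of cardinality ≤ n satisfying φ, and A ⊨ χ' iff A has a substructure of cardinality exactly n satisfying φ. -/

import Mathlib

/-!
A substructure with at most `n` elements is the range of an `n`-tuple that is closed under the
finitely many function symbols, and that closure is a finite conjunction of finite disjunctions
of equations between the entries. Relativizing `φ` to the entries of the tuple, each quantifier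
becoming a finite conjunction over them, turns "the range satisfies `φ`" into a formula in the
tuple. So `θ_{≤n}(φ)` is `∃ v₁ … vₙ, closed(v) ∧ φ^v`, and `θ_n(φ)` adds that the `vᵢ` are
pairwise distinct.
-/

open FirstOrder Language

universe u v

namespace FirstOrder.Language

variable {L : Language.{u, v}} {M : Type*} [L.Structure M] {ι α : Type*} [Finite ι]

noncomputable def BoundedFormula.relativize (τ : α → ι) :
    ∀ {k : ℕ}, L.BoundedFormula α k → (Fin k → ι) → L.Formula ι
  | _, falsum, _ => ⊥
  | _, equal t₁ t₂, σ => (t₁.relabel (Sum.elim τ σ)).equal (t₂.relabel (Sum.elim τ σ))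
  | _, rel R ts, σ => R.formula fun i => (ts i).relabel (Sum.elim τ σ)
  | _, imp φ ψ, σ => (φ.relativize τ σ).imp (ψ.relativize τ σ)
  | _, all φ, σ => Formula.iInf fun j => φ.relativize τ (Fin.snoc σ j)

theorem Term.realize_relabel_substructure {β : Type*} {S : L.Substructure M} (w : β → S)
    (g : α → β) (t : L.Term α) :
    (t.relabel g).realize (fun i => (w i : M)) = ((t.realize (w ∘ g) : S) : M) := by
  rw [Term.realize_relabel, ← realize_term_substructure]
  rfl

theorem BoundedFormula.realize_relativize {S : L.Substructure M} {w : ι → S}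
    (hw : Function.Surjective w) (τ : α → ι) {k : ℕ} (φ : L.BoundedFormula α k)
    (σ : Fin k → ι) :
    (φ.relativize τ σ).Realize (fun i => (w i : M)) ↔ φ.Realize (w ∘ τ) (w ∘ σ) := by
  induction φ with
  | falsum => simp [relativize, BoundedFormula.Realize]
  | equal t₁ t₂ =>
    simp only [relativize, Formula.realize_equal, Term.realize_relabel_substructure,
      Subtype.coe_inj, Sum.comp_elim]
    rfl
  | rel R ts =>
    simp only [relativize, Formula.realize_rel, Term.realize_relabel_substructure, Sum.comp_elim]
    rfl
  | imp φ ψ ihφ ihψ => simp only [relativize, Formula.realize_imp, ihφ, ihψ, realize_imp]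
  | all φ ih =>
    simp only [relativize, Formula.realize_iInf, ih, realize_all, Fin.comp_snoc]
    exact (hw.forall (p := fun a => φ.Realize (w ∘ τ) (Fin.snoc (w ∘ σ) a))).symm

variable (L ι) in
noncomputable def Formula.rangeClosed [Finite (Σ k, L.Functions k)] : L.Formula ι :=
  Formula.iInf fun f : Σ k, L.Functions k => Formula.iInf fun x : Fin f.1 → ι =>
    Formula.iSup fun j => (var j).equal (func f.2 fun i => var (x i))

theorem Formula.realize_rangeClosed_iff [Finite (Σ k, L.Functions k)] (v : ι → M) :
    (Formula.rangeClosed L ι).Realize v ↔ ∃ S : L.Substructure M, (S : Set M) = Set.range v := by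
  simp only [rangeClosed, realize_iInf, realize_iSup, realize_equal, Term.realize_func,
    Term.realize_var, Sigma.forall]
  constructor
  · intro h
    refine ⟨⟨Set.range v, fun {k} f x hx => ?_⟩, rfl⟩
    choose σ hσ using hx
    rw [← funext hσ]
    exact h k f σ
  · rintro ⟨S, hS⟩ k f x
    have hmem (y : M) : y ∈ S ↔ y ∈ Set.range v := by rw [← hS, SetLike.mem_coe]
    exact (hmem _).1 (S.fun_mem f _ fun i => (hmem _).2 ⟨x i, rfl⟩)

variable (L ι) in
noncomputable def Formula.distinct : L.Formula ι :=
  Formula.iInf fun p : {p : ι × ι // p.1 ≠ p.2} => ∼((var p.1.1).equal (var p.1.2))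

theorem Formula.realize_distinct_iff (v : ι → M) :
    (Formula.distinct L ι).Realize v ↔ Function.Injective v := by
  simp only [distinct, realize_iInf, realize_not, realize_equal, Term.realize_var, Subtype.forall,
    Prod.forall, Function.Injective]
  exact forall₂_congr fun i j => by tauto

theorem Sentence.realize_relativize_of_coe_eq_range {S : L.Substructure M} {v : ι → M}
    (hS : (S : Set M) = Set.range v) (φ : L.Sentence) :
    (φ.relativize Empty.elim Fin.elim0).Realize v ↔ S ⊨ φ := by
  have hmem (i : ι) : v i ∈ S := by rw [← SetLike.mem_coe, hS]; exact ⟨i, rfl⟩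
  have hw : Function.Surjective fun i => (⟨v i, hmem i⟩ : S) := by
    rintro ⟨x, hx⟩
    obtain ⟨i, rfl⟩ : x ∈ Set.range v := hS ▸ hx
    exact ⟨i, rfl⟩
  rw [BoundedFormula.realize_relativize hw]
  exact iff_of_eq (congrArg₂ _ (Subsingleton.elim _ _) (Subsingleton.elim _ _))

noncomputable def Sentence.exRangeSubstructure [Finite (Σ k, L.Functions k)] (ψ : L.Formula ι)
    (φ : L.Sentence) : L.Sentence :=
  Formula.iExs ι
    ((ψ ⊓ Formula.rangeClosed L ι ⊓ φ.relativize Empty.elim Fin.elim0).relabel Sum.inr)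

theorem Sentence.realize_exRangeSubstructure [Finite (Σ k, L.Functions k)] (ψ : L.Formula ι)
    (φ : L.Sentence) :
    M ⊨ exRangeSubstructure ψ φ ↔
      ∃ S : L.Substructure M, (∃ v : ι → M, ψ.Realize v ∧ Set.range v = S) ∧ S ⊨ φ := by
  simp only [Sentence.Realize, exRangeSubstructure, Formula.realize_iExs, Formula.realize_relabel,
    Sum.elim_comp_inr, Formula.realize_inf, Formula.realize_rangeClosed_iff]
  constructor
  · rintro ⟨v, ⟨hψ, S, hS⟩, hφ⟩
    exact ⟨S, ⟨v, hψ, hS.symm⟩, (realize_relativize_of_coe_eq_range hS φ).1 hφ⟩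
  · rintro ⟨S, ⟨v, hψ, hS⟩, hφ⟩
    exact ⟨v, ⟨hψ, S, hS.symm⟩, (realize_relativize_of_coe_eq_range hS.symm φ).2 hφ⟩

end FirstOrder.Language

theorem Set.exists_fin_range_eq_iff {α : Type*} {n : ℕ} (hn : 1 ≤ n) {s : Set α} :
    (∃ v : Fin n → α, Set.range v = s) ↔ Nonempty s ∧ Finite s ∧ Nat.card s ≤ n := by
  constructor
  · rintro ⟨v, rfl⟩
    exact ⟨⟨⟨v ⟨0, hn⟩, mem_range_self _⟩⟩, inferInstance,
      (Finite.card_range_le v).trans (Nat.card_fin n).le⟩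
  · rintro ⟨hne, hfin, hcard⟩
    let e : s ↪ Fin n := (Finite.equivFin s).toEmbedding.trans (Fin.castLEEmb hcard)
    refine ⟨(↑) ∘ Function.invFun e, ?_⟩
    rw [range_comp, (Function.invFun_surjective e.injective).range_eq, image_univ,
      Subtype.range_coe]

theorem Set.exists_fin_injective_range_eq_iff {α : Type*} {n : ℕ} (hn : 1 ≤ n) {s : Set α} :
    (∃ v : Fin n → α, Function.Injective v ∧ Set.range v = s) ↔
      Nonempty s ∧ Finite s ∧ Nat.card s = n := by
  constructor
  · rintro ⟨v, hv, rfl⟩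
    exact ⟨⟨⟨v ⟨0, hn⟩, mem_range_self _⟩⟩, inferInstance, by
      rw [Nat.card_range_of_injective hv, Nat.card_fin]⟩
  · rintro ⟨-, hfin, hcard⟩
    let e := Finite.equivFinOfCardEq hcard
    exact ⟨(↑) ∘ e.symm, Subtype.val_injective.comp e.symm.injective, by
      rw [range_comp, e.symm.surjective.range_eq, image_univ, Subtype.range_coe]⟩

open FirstOrder.Language.Sentence in
theorem theta_le_n_and_theta_n_expressible
    {L : FirstOrder.Language.{u, v}} [Finite (Σ n : ℕ, L.Functions n)]
    (φ : L.Sentence) (n : ℕ) (hn : 1 ≤ n) :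
    (∃ χ : L.Sentence,
        ∀ (M : Type (max u v)) [L.Structure M] [Nonempty M],
          M ⊨ χ ↔ ∃ S : L.Substructure M,
            Nonempty S ∧ Finite S ∧ Nat.card S ≤ n ∧ S ⊨ φ) ∧
      (∃ χ' : L.Sentence,
        ∀ (M : Type (max u v)) [L.Structure M] [Nonempty M],
          M ⊨ χ' ↔ ∃ S : L.Substructure M,
            Nonempty S ∧ Finite S ∧ Nat.card S = n ∧ S ⊨ φ) := by
  refine ⟨⟨exRangeSubstructure (⊤ : L.Formula (Fin n)) φ, fun M _ _ => ?_⟩,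
    ⟨exRangeSubstructure (Formula.distinct L (Fin n)) φ, fun M _ _ => ?_⟩⟩
  · simp only [realize_exRangeSubstructure, Formula.realize_top, true_and,
      Set.exists_fin_range_eq_iff hn, and_assoc]
    -- `↥(S : Set M)` and `↥S` agree only up to unfolding
    rfl
  · simp only [realize_exRangeSubstructure, Formula.realize_distinct_iff,
      Set.exists_fin_injective_range_eq_iff hn, and_assoc]
    rfl
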